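/- arXiv:2202.07112 — 6 statements merged into one kernel-verified Lean document; each statement's English description precedes it below -/
import Mathlib

section
/- Let Ω = B_1(0) ⊆ ℝⁿ, n ≥ 1, s > 0, and define D₁(x) = |x|^s I. Then for every β ∈ (max(1/2, n/(s-2+2n)), 1) there exists a constant C ≥ 0 such that for all continuous vector fields Φ : closure(Ω) → ℝⁿ, ∫_Ω |∇·D₁ · Φ| ≤ C ( ∫_Ω (Φ · D₁ Φ)^β + 1 ), where ∇·D₁(x) = s|x|^{s-2}x almost everywhere. -/
open MeasureTheory Real

open Metric

/-!
Write `‖x‖ ^ (s - 1) * ‖Φ x‖ = (‖x‖ ^ (s / 2) * ‖Φ x‖) * ‖x‖ ^ (s / 2 - 1)` and apply Young's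
inequality with the exponents `2β` and `q = 2β / (2β - 1)`: the integrand is bounded by
`s * ((‖x‖ ^ s * ‖Φ x‖ ^ 2) ^ β + ‖x‖ ^ ((s / 2 - 1) * q))`. The second term is integrable on the
unit ball because `β > n / (s - 2 + 2n)` says exactly that `(s / 2 - 1) * q > -n`, and the first
is continuous on the closed ball.
-/

lemma rpow_sub_one_mul_le_rpow_add_rpow {a c s β q : ℝ} (ha : 0 < a) (hc : 0 ≤ c)
    (hpq : (2 * β).HolderConjugate q) :
    a ^ (s - 1) * c ≤ (a ^ s * c ^ 2) ^ β + a ^ ((s / 2 - 1) * q) := by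
  have hsplit : a ^ (s - 1) * c = (a ^ (s / 2) * c) * a ^ (s / 2 - 1) := by
    rw [mul_right_comm, ← rpow_add ha]; ring_nf
  have hfirst : (a ^ (s / 2) * c) ^ (2 * β) = (a ^ s * c ^ 2) ^ β := by
    rw [rpow_mul (by positivity), rpow_two, mul_pow, ← rpow_natCast (a ^ (s / 2)),
      ← rpow_mul ha.le]
    norm_num
  have hsecond : (a ^ (s / 2 - 1)) ^ q = a ^ ((s / 2 - 1) * q) := (rpow_mul ha.le _ _).symm
  calc a ^ (s - 1) * c = (a ^ (s / 2) * c) * a ^ (s / 2 - 1) := hsplit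
    _ ≤ (a ^ (s / 2) * c) ^ (2 * β) / (2 * β) + (a ^ (s / 2 - 1)) ^ q / q :=
        young_inequality_of_nonneg (by positivity) (by positivity) hpq
    _ ≤ (a ^ (s / 2) * c) ^ (2 * β) + (a ^ (s / 2 - 1)) ^ q := by
        gcongr
        · exact div_le_self (by positivity) hpq.lt.le
        · exact div_le_self (by positivity) hpq.symm.lt.le
    _ = (a ^ s * c ^ 2) ^ β + a ^ ((s / 2 - 1) * q) := by rw [hfirst, hsecond]

lemma abs_mul_rpow_norm_mul_inner_le {E : Type*} [NormedAddCommGroup E] [InnerProductSpace ℝ E]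
    {s β q : ℝ} (hs : 0 ≤ s) (hpq : (2 * β).HolderConjugate q) (x v : E) :
    |s * ‖x‖ ^ (s - 2) * inner ℝ x v|
      ≤ s * ((‖x‖ ^ s * ‖v‖ ^ 2) ^ β + ‖x‖ ^ ((s / 2 - 1) * q)) := by
  rcases eq_or_ne x 0 with rfl | hx
  · simp only [inner_zero_left, mul_zero, abs_zero]
    positivity
  have hxpos : 0 < ‖x‖ := norm_pos_iff.2 hx
  calc |s * ‖x‖ ^ (s - 2) * inner ℝ x v| = s * ‖x‖ ^ (s - 2) * |inner ℝ x v| := by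
        rw [abs_mul, abs_of_nonneg (by positivity)]
    _ ≤ s * ‖x‖ ^ (s - 2) * (‖x‖ * ‖v‖) := by gcongr; exact abs_real_inner_le_norm x v
    _ = s * (‖x‖ ^ (s - 1) * ‖v‖) := by
        rw [← mul_assoc, mul_assoc s, ← rpow_add_one hxpos.ne']; ring_nf
    _ ≤ s * ((‖x‖ ^ s * ‖v‖ ^ 2) ^ β + ‖x‖ ^ ((s / 2 - 1) * q)) := by
        gcongr; exact rpow_sub_one_mul_le_rpow_add_rpow hxpos (norm_nonneg v) hpq

lemma neg_lt_mul_conjExponent {n s β : ℝ} (hden : 0 < s - 2 + 2 * n) (hβ : 1 / 2 < β)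
    (hβn : n / (s - 2 + 2 * n) < β) : -n < (s / 2 - 1) * (2 * β).conjExponent := by
  rw [div_lt_iff₀ hden] at hβn
  rw [conjExponent, mul_div_assoc', lt_div_iff₀ (by linarith)]
  nlinarith

lemma integrableOn_ball_norm_rpow {E : Type*} [NormedAddCommGroup E] [NormedSpace ℝ E]
    [FiniteDimensional ℝ E] [MeasurableSpace E] [BorelSpace E] {μ : Measure E}
    [μ.IsAddHaarMeasure] (hd : 1 ≤ Module.finrank ℝ E) {r : ℝ}
    (hr : -(Module.finrank ℝ E : ℝ) < r) (R : ℝ) :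
    IntegrableOn (fun x : E ↦ ‖x‖ ^ r) (ball 0 R) μ :=
  integrableOn_ball_of_norm_le_rpow (C := 1) (α := -r) hd (by linarith)
    (.of_forall fun x ↦ by simp [abs_of_nonneg (rpow_nonneg (norm_nonneg x) r)])
    (measurable_norm.pow_const r).aestronglyMeasurable

lemma integrableOn_ball_rpow_norm_mul_sq {E F : Type*} [NormedAddCommGroup E] [NormedSpace ℝ E]
    [ProperSpace E] [MeasurableSpace E] [BorelSpace E] [NormedAddCommGroup F]
    {μ : Measure E} [IsFiniteMeasureOnCompacts μ] {s β R : ℝ} (hs : 0 < s) (hβ : 0 ≤ β)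
    {Φ : E → F} (hΦ : ContinuousOn Φ (closure (ball 0 R))) :
    IntegrableOn (fun x ↦ (‖x‖ ^ s * ‖Φ x‖ ^ 2) ^ β) (ball 0 R) μ := by
  have hcont : ContinuousOn (fun x ↦ (‖x‖ ^ s * ‖Φ x‖ ^ 2) ^ β) (closure (ball 0 R)) :=
    ((continuous_norm.rpow_const fun _ ↦ Or.inr hs.le).continuousOn.mul
      (hΦ.norm.pow 2)).rpow_const fun _ _ ↦ Or.inr hβ
  exact (hcont.integrableOn_compact isBounded_ball.isCompact_closure).mono_set subset_closure

theorem stmt0_general (n : ℕ) (hn : 1 ≤ n) (s : ℝ) (hs : 0 < s)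
    (β : ℝ) (hβ1 : max (1/2) ((n : ℝ) / (s - 2 + 2 * n)) < β) :
    ∃ C : ℝ, 0 ≤ C ∧
      ∀ Φ : EuclideanSpace ℝ (Fin n) → EuclideanSpace ℝ (Fin n),
        ContinuousOn Φ (closure (Metric.ball (0 : EuclideanSpace ℝ (Fin n)) 1)) →
        ∫ x in Metric.ball (0 : EuclideanSpace ℝ (Fin n)) 1,
            |s * ‖x‖ ^ (s - 2) * (inner ℝ x (Φ x) : ℝ)|
          ≤ C * ((∫ x in Metric.ball (0 : EuclideanSpace ℝ (Fin n)) 1,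
              (‖x‖ ^ s * ‖Φ x‖ ^ 2) ^ β) + 1) := by
  have hdim : Module.finrank ℝ (EuclideanSpace ℝ (Fin n)) = n := finrank_euclideanSpace_fin
  have hβ : 1 / 2 < β := (le_max_left _ _).trans_lt hβ1
  have hpq : (2 * β).HolderConjugate (2 * β).conjExponent := .conjExponent (by linarith)
  have hn' : (1 : ℝ) ≤ n := by exact_mod_cast hn
  have hweight := integrableOn_ball_norm_rpow (μ := volume) (hdim ▸ hn)
    (hdim ▸ neg_lt_mul_conjExponent (by linarith) hβ ((le_max_right _ _).trans_lt hβ1)) 1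
  set K := ∫ x in ball (0 : EuclideanSpace ℝ (Fin n)) 1,
    ‖x‖ ^ ((s / 2 - 1) * (2 * β).conjExponent)
  have hK : 0 ≤ K := setIntegral_nonneg measurableSet_ball fun x _ ↦ by positivity
  refine ⟨s * (K + 1), by positivity, fun Φ hΦ ↦ ?_⟩
  have hΦβ := integrableOn_ball_rpow_norm_mul_sq (μ := volume) (β := β) hs (by linarith) hΦ
  have hA : 0 ≤ ∫ x in ball (0 : EuclideanSpace ℝ (Fin n)) 1, (‖x‖ ^ s * ‖Φ x‖ ^ 2) ^ β :=
    setIntegral_nonneg measurableSet_ball fun x _ ↦ by positivity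
  calc _ ≤ ∫ x in ball (0 : EuclideanSpace ℝ (Fin n)) 1,
          s * ((‖x‖ ^ s * ‖Φ x‖ ^ 2) ^ β + ‖x‖ ^ ((s / 2 - 1) * (2 * β).conjExponent)) :=
        integral_mono_of_nonneg (.of_forall fun _ ↦ abs_nonneg _) ((hΦβ.add hweight).const_mul s)
          (.of_forall fun x ↦ abs_mul_rpow_norm_mul_inner_le hs.le hpq x (Φ x))
    _ = s * ((∫ x in ball (0 : EuclideanSpace ℝ (Fin n)) 1, (‖x‖ ^ s * ‖Φ x‖ ^ 2) ^ β) + K) := by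
        rw [integral_const_mul, integral_add hΦβ hweight]
    _ ≤ _ := by nlinarith [mul_nonneg hK hA]

/-- divergence estimate for `D₁(x) = |x|^s I` on the unit ball. -/
theorem stmt0 (n : ℕ) (hn : 1 ≤ n) (s : ℝ) (hs : 0 < s)
    (β : ℝ) (hβ1 : max (1/2) ((n : ℝ) / (s - 2 + 2 * n)) < β) (hβ2 : β < 1) :
    ∃ C : ℝ, 0 ≤ C ∧
      ∀ Φ : EuclideanSpace ℝ (Fin n) → EuclideanSpace ℝ (Fin n),
        ContinuousOn Φ (closure (Metric.ball (0 : EuclideanSpace ℝ (Fin n)) 1)) →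
        ∫ x in Metric.ball (0 : EuclideanSpace ℝ (Fin n)) 1,
            |s * ‖x‖ ^ (s - 2) * (inner ℝ x (Φ x) : ℝ)|
          ≤ C * ((∫ x in Metric.ball (0 : EuclideanSpace ℝ (Fin n)) 1,
              (‖x‖ ^ s * ‖Φ x‖ ^ 2) ^ β) + 1) :=
  stmt0_general n hn s hs β hβ1
end

section
/- Let Ω = B_1(0) ⊆ ℝⁿ, n ≥ 1, s > 1, and define D₂(x₁,…,xₙ) = |x₁|^s I. Then for every β ∈ (max(1/2, 1/s), 1) there exists C ≥ 0 such that for all continuous vector fields Φ : closure(Ω) → ℝⁿ, ∫_Ω |∇·D₂ · Φ| ≤ C ( ∫_Ω (Φ · D₂ Φ)^β + 1 ), where ∇·D₂(x) = (s|x₁|^{s-2}x₁, 0, …, 0) almost everywhere. -/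
/-!
Since `|s |x₁|^(s-2) x₁ Φ₁| ≤ s |x₁|^(s-1) |Φ|`, everything rests on the pointwise bound
`|x₁|^(s-1) |Φ| ≤ (|x₁|^s |Φ|²)^β + |x₁|^γ`, `γ = (s-2)β/(2β-1)`, which is Young's inequality with
exponents `2β` and `2β/(2β-1)` applied to `(|x₁|^(s/2) |Φ|) · |x₁|^((s-2)/2)`. The exponent `γ`
exceeds `-1` exactly when `sβ > 1`, so `|x₁|^γ` is integrable on the ball and its integral is the
constant; the other term is the right-hand side of the estimate.
-/

open MeasureTheory Real Set Metric

lemma locallyIntegrable_abs_rpow {γ : ℝ} (hγ : -1 < γ) :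
    LocallyIntegrable (fun t : ℝ => |t| ^ γ) :=
  locallyIntegrable_of_norm_le_rpow (μ := volume) (C := 1) (α := -γ) (by simp) (by simp; linarith)
    (ae_of_all _ fun t => by simp [abs_rpow_of_nonneg (abs_nonneg t)])
    (continuous_abs.measurable.pow_const γ).aestronglyMeasurable

lemma integrableOn_ball_comp_apply {ι E : Type*} [Fintype ι] [NormedAddCommGroup E]
    {f : ℝ → E} (hf : LocallyIntegrable f) (i : ι) (r : ℝ) :
    IntegrableOn (fun x : EuclideanSpace ℝ ι => f (x i)) (ball 0 r) := by
  have hcube : IntegrableOn (fun y : ι → ℝ => f (y i)) (univ.pi fun _ => Icc (-r) r) := by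
    rw [IntegrableOn, volume_pi, Measure.restrict_pi_pi]
    exact integrable_comp_eval (hf.integrableOn_isCompact isCompact_Icc)
  have hsub : ball (0 : EuclideanSpace ℝ ι) r ⊆ WithLp.ofLp ⁻¹' univ.pi fun _ => Icc (-r) r :=
    fun x hx => mem_univ_pi.2 fun j =>
      abs_le.1 ((PiLp.norm_apply_le x j).trans (mem_ball_zero_iff.1 hx).le)
  exact (((PiLp.volume_preserving_ofLp ι).integrableOn_comp_preimage
    (MeasurableEquiv.toLp 2 _).symm.measurableEmbedding).2 hcube).mono_set hsub

lemma mul_le_rpow_add_rpow {a b p q : ℝ} (ha : 0 ≤ a) (hb : 0 ≤ b)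
    (hpq : p.HolderConjugate q) : a * b ≤ a ^ p + b ^ q := by
  have hp := div_le_self (rpow_nonneg ha p) hpq.lt.le
  have hq := div_le_self (rpow_nonneg hb q) hpq.symm.lt.le
  linarith [young_inequality_of_nonneg ha hb hpq]

lemma rpow_sub_one_mul_le {s β t u : ℝ} (hs : 1 < s) (hβ : 1 / 2 < β) (ht : 0 ≤ t) (hu : 0 ≤ u) :
    t ^ (s - 1) * u ≤ (t ^ s * u ^ 2) ^ β + t ^ ((s - 2) * β / (2 * β - 1)) := by
  have hpq : (2 * β).HolderConjugate (2 * β / (2 * β - 1)) :=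
    (holderConjugate_iff_eq_conjExponent (by linarith)).2 rfl
  have ha : 0 ≤ t ^ (s / 2) * u := mul_nonneg (rpow_nonneg ht _) hu
  calc t ^ (s - 1) * u = t ^ (s / 2) * u * t ^ ((s - 2) / 2) := by
        rw [mul_right_comm, ← rpow_add' ht (by linarith)]
        ring_nf
    _ ≤ (t ^ (s / 2) * u) ^ (2 * β) + (t ^ ((s - 2) / 2)) ^ (2 * β / (2 * β - 1)) :=
        mul_le_rpow_add_rpow ha (rpow_nonneg ht _) hpq
    _ = (t ^ s * u ^ 2) ^ β + t ^ ((s - 2) * β / (2 * β - 1)) := by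
        rw [rpow_mul ha, rpow_two, mul_pow, ← rpow_natCast, ← rpow_mul ht, ← rpow_mul ht]
        have e1 : s / 2 * (2 : ℕ) = s := by push_cast; ring
        have e2 : (s - 2) / 2 * (2 * β / (2 * β - 1)) = (s - 2) * β / (2 * β - 1) := by ring
        rw [e1, e2]

lemma abs_mul_abs_rpow_sub_two_mul_mul_le {s β t v u : ℝ} (hs : 1 < s) (hβ : 1 / 2 < β)
    (hvu : |v| ≤ u) :
    |s * |t| ^ (s - 2) * t * v| ≤ s * ((|t| ^ s * u ^ 2) ^ β + |t| ^ ((s - 2) * β / (2 * β - 1))) := by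
  have hs0 : 0 < s := by linarith
  calc |s * |t| ^ (s - 2) * t * v| = s * (|t| ^ (s - 1) * |v|) := by
        rw [show s - 1 = s - 2 + 1 by ring, rpow_add_one' (abs_nonneg t) (by linarith), abs_mul,
          abs_mul, abs_mul, abs_of_pos hs0, abs_of_nonneg (rpow_nonneg (abs_nonneg t) _)]
        ring
    _ ≤ s * (|t| ^ (s - 1) * u) := by gcongr
    _ ≤ _ := by
        gcongr
        exact rpow_sub_one_mul_le hs hβ (abs_nonneg t) ((abs_nonneg v).trans hvu)

lemma integrableOn_ball_rpow_abs_mul_norm_sq_rpow {ι F : Type*} [Fintype ι]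
    [NormedAddCommGroup F] (i : ι) {s β r : ℝ} (hs : 0 ≤ s) (hβ : 0 ≤ β)
    {Φ : EuclideanSpace ℝ ι → F} (hΦ : ContinuousOn Φ (closure (ball 0 r))) :
    IntegrableOn (fun x => (|x i| ^ s * ‖Φ x‖ ^ 2) ^ β) (ball 0 r) := by
  have hx : Continuous fun x : EuclideanSpace ℝ ι => |x i| ^ s :=
    (continuous_abs.comp (EuclideanSpace.proj i).continuous).rpow_const fun _ => Or.inr hs
  refine (ContinuousOn.integrableOn_compact isBounded_ball.isCompact_closure ?_).mono_set
    subset_closure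
  exact (hx.continuousOn.mul (hΦ.norm.pow 2)).rpow_const fun _ _ => Or.inr hβ

theorem stmt1_general (n : ℕ) (hn : 1 ≤ n) (s : ℝ) (hs : 1 < s)
    (β : ℝ) (hβ1 : max (1/2) (1/s) < β) :
    ∃ C : ℝ, 0 ≤ C ∧
      ∀ Φ : EuclideanSpace ℝ (Fin n) → EuclideanSpace ℝ (Fin n),
        ContinuousOn Φ (closure (Metric.ball (0 : EuclideanSpace ℝ (Fin n)) 1)) →
        ∫ x in Metric.ball (0 : EuclideanSpace ℝ (Fin n)) 1,
            |s * |x ⟨0, hn⟩| ^ (s - 2) * x ⟨0, hn⟩ * Φ x ⟨0, hn⟩|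
          ≤ C * ((∫ x in Metric.ball (0 : EuclideanSpace ℝ (Fin n)) 1,
              (|x ⟨0, hn⟩| ^ s * ‖Φ x‖ ^ 2) ^ β) + 1) := by
  have hs0 : 0 < s := by linarith
  have hβ : 1 / 2 < β := (le_max_left _ _).trans_lt hβ1
  have hγ : -1 < (s - 2) * β / (2 * β - 1) := by
    have : 1 < s * β := by rw [← div_lt_iff₀' hs0]; exact (le_max_right _ _).trans_lt hβ1
    rw [lt_div_iff₀ (by linarith)]
    linarith
  set B := ball (0 : EuclideanSpace ℝ (Fin n)) 1
  have hK := integrableOn_ball_comp_apply (locallyIntegrable_abs_rpow hγ) (⟨0, hn⟩ : Fin n) 1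
  set K := ∫ x in B, |x ⟨0, hn⟩| ^ ((s - 2) * β / (2 * β - 1))
  have hK0 : 0 ≤ K := integral_nonneg fun x => rpow_nonneg (abs_nonneg _) _
  refine ⟨s * (1 + K), by positivity, fun Φ hΦ => ?_⟩
  have hA := integrableOn_ball_rpow_abs_mul_norm_sq_rpow (β := β) ⟨0, hn⟩ hs0.le (by linarith) hΦ
  set A := ∫ x in B, (|x ⟨0, hn⟩| ^ s * ‖Φ x‖ ^ 2) ^ β
  have hA0 : 0 ≤ A :=
    integral_nonneg fun x => rpow_nonneg (mul_nonneg (rpow_nonneg (abs_nonneg _) _) (sq_nonneg _)) _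
  calc ∫ x in B, |s * |x ⟨0, hn⟩| ^ (s - 2) * x ⟨0, hn⟩ * Φ x ⟨0, hn⟩|
      ≤ ∫ x in B, s * ((|x ⟨0, hn⟩| ^ s * ‖Φ x‖ ^ 2) ^ β
          + |x ⟨0, hn⟩| ^ ((s - 2) * β / (2 * β - 1))) :=
        integral_mono_of_nonneg (ae_of_all _ fun _ => abs_nonneg _) ((hA.add hK).const_mul s)
          (ae_of_all _ fun x =>
            abs_mul_abs_rpow_sub_two_mul_mul_le hs hβ (PiLp.norm_apply_le (Φ x) _))
    _ = s * (A + K) := by rw [integral_const_mul, integral_add hA hK]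
    _ ≤ s * (1 + K) * (A + 1) := by nlinarith [mul_nonneg hK0 hA0]

/-- divergence estimate for `D₂(x) = |x₁|^s I` on the unit ball. -/
theorem stmt1 (n : ℕ) (hn : 1 ≤ n) (s : ℝ) (hs : 1 < s)
    (β : ℝ) (hβ1 : max (1/2) (1/s) < β) (hβ2 : β < 1) :
    ∃ C : ℝ, 0 ≤ C ∧
      ∀ Φ : EuclideanSpace ℝ (Fin n) → EuclideanSpace ℝ (Fin n),
        ContinuousOn Φ (closure (Metric.ball (0 : EuclideanSpace ℝ (Fin n)) 1)) →
        ∫ x in Metric.ball (0 : EuclideanSpace ℝ (Fin n)) 1,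
            |s * |x ⟨0, hn⟩| ^ (s - 2) * x ⟨0, hn⟩ * Φ x ⟨0, hn⟩|
          ≤ C * ((∫ x in Metric.ball (0 : EuclideanSpace ℝ (Fin n)) 1,
              (|x ⟨0, hn⟩| ^ s * ‖Φ x‖ ^ 2) ^ β) + 1) :=
  stmt1_general n hn s hs β hβ1
end

section
/- Let Ω ⊆ ℝⁿ be a bounded domain, β ∈ (1/2, 1), and D ∈ C⁰(closure(Ω); ℝ^{n×n}) positive semidefinite with ∇·D ∈ L¹(Ω;ℝⁿ). If there exists C ≥ 0 such that ∫_Ω |(∇·D)·Φ| ≤ C(∫_Ω |Φ · D Φ|^β + 1) for all continuous Φ : closure(Ω) → ℝⁿ, then ∇·D ∈ L^{2β/(2β-1)}(Ω; ℝⁿ), and in particular ∇·D ∈ L²(Ω;ℝⁿ). -/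
/-!
Testing the estimate with `t • Φ` and optimising over `t > 0` turns it into the homogeneous bound
`∫ |∇·D ⬝ Φ| ≤ 2C (∫ |Φ ⬝ DΦ|^β)^{1/(2β)}`. For `Φ = φ eᵢ` the quadratic form is `φ² Dᵢᵢ`, and
`Dᵢᵢ` is bounded on the compact set `closure Ω`, so each component `gᵢ` of `∇·D` satisfies
`∫ |gᵢ φ| ≤ c ‖φ‖_{2β}` for bounded continuous `φ`; a.e. approximation and dominated convergence
extend this to bounded measurable `φ`. Testing with `φ = sign gᵢ · min(|gᵢ|, k)^{q-1}`, where
`q = 2β/(2β-1)` is the conjugate exponent of `2β`, gives `‖min(|gᵢ|, k)‖_q ≤ c` for every `k`,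
and Fatou's lemma gives `‖gᵢ‖_q ≤ c`. As `β < 1`, `q ≥ 2`, and `L^q ⊆ L²` on the bounded set `Ω`.
-/

open MeasureTheory Real Matrix Filter
open scoped ENNReal Topology

theorem le_two_mul_mul_rpow_inv_of_forall_mul_le {L A C r : ℝ} (hr : 0 < r) (hA : 0 ≤ A)
    (h : ∀ t : ℝ, 0 < t → t * L ≤ C * (t ^ r * A + 1)) : L ≤ 2 * C * A ^ r⁻¹ := by
  rcases hA.eq_or_lt with rfl | hA
  · rw [zero_rpow (inv_pos.2 hr).ne', mul_zero]
    by_contra! hL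
    have := h ((|C| + 1) / L) (by positivity)
    rw [div_mul_cancel₀ _ hL.ne', mul_zero, zero_add, mul_one] at this
    linarith [le_abs_self C]
  · have ht : 0 < A ^ (-r⁻¹) := rpow_pos_of_pos hA _
    have hscale : (A ^ (-r⁻¹)) ^ r * A = 1 := by
      rw [← rpow_mul hA.le, neg_mul, inv_mul_cancel₀ hr.ne', rpow_neg_one, inv_mul_cancel₀ hA.ne']
    have := h _ ht
    rw [hscale, ← le_div_iff₀' ht, rpow_neg hA.le, div_inv_eq_mul] at this
    linarith

theorem rpow_inv_le_of_le_mul_rpow_inv {X c p q : ℝ} (hpq : p.HolderConjugate q) (hX : 0 ≤ X)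
    (hc : 0 ≤ c) (h : X ≤ c * X ^ p⁻¹) : X ^ q⁻¹ ≤ c := by
  rcases hX.eq_or_lt with rfl | hX
  · rwa [zero_rpow (inv_pos.2 hpq.symm.pos).ne']
  · have hXp : 0 < X ^ p⁻¹ := rpow_pos_of_pos hX _
    calc X ^ q⁻¹ = X / X ^ p⁻¹ := by
          rw [← hpq.one_sub_inv, rpow_sub hX, rpow_one]
      _ ≤ c := (div_le_iff₀ hXp).2 h

theorem abs_rpow_mul_div_abs_le {m : ℝ} (hm : 0 ≤ m) (r a : ℝ) :
    |m ^ r * (a / |a|)| ≤ m ^ r := by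
  rw [abs_mul, abs_of_nonneg (rpow_nonneg hm _), abs_div, abs_abs]
  exact mul_le_of_le_one_right (rpow_nonneg hm _) (div_self_le_one _)

theorem rpow_le_abs_mul_rpow_sub_one_mul_div_abs {a m q : ℝ} (hm : 0 ≤ m) (hma : m ≤ |a|)
    (hq : 0 < q) : m ^ q ≤ |a * (m ^ (q - 1) * (a / |a|))| := by
  have ha : a * (m ^ (q - 1) * (a / |a|)) = m ^ (q - 1) * |a| := by
    rw [mul_left_comm, ← mul_div_assoc, ← abs_mul_abs_self a, mul_self_div_self]
  rw [ha, abs_of_nonneg (mul_nonneg (rpow_nonneg hm _) (abs_nonneg _))]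
  calc m ^ q = m ^ (q - 1) * m := by rw [← rpow_add_one' hm (by linarith), sub_add_cancel]
    _ ≤ m ^ (q - 1) * |a| := mul_le_mul_of_nonneg_left hma (rpow_nonneg hm _)

section Approximation

variable {α : Type*} [TopologicalSpace α] [NormalSpace α] [MeasurableSpace α] [BorelSpace α]
  {μ : Measure α} [IsFiniteMeasure μ] [μ.WeaklyRegular]

theorem exists_seq_continuous_abs_le_tendsto_ae {ψ : α → ℝ} {K : ℝ}
    (hψ : AEStronglyMeasurable ψ μ) (hψK : ∀ x, |ψ x| ≤ K) :
    ∃ φ : ℕ → α → ℝ, (∀ j, Continuous (φ j)) ∧ (∀ j x, |φ j x| ≤ K) ∧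
      ∀ᵐ x ∂μ, Tendsto (fun j => φ j x) atTop (𝓝 (ψ x)) := by
  have hψL1 : MemLp ψ 1 μ := MemLp.of_bound hψ K (Eventually.of_forall hψK)
  choose φ₀ hφ₀ _ using fun j : ℕ => hψL1.exists_boundedContinuous_eLpNorm_sub_le
    ENNReal.one_ne_top (ENNReal.inv_ne_zero.2 (ENNReal.natCast_ne_top j))
  have hL1 : Tendsto (fun j => eLpNorm ((φ₀ j : α → ℝ) - ψ) 1 μ) atTop (𝓝 0) :=
    tendsto_of_tendsto_of_tendsto_of_le_of_le tendsto_const_nhds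
      ENNReal.tendsto_inv_nat_nhds_zero (fun _ => zero_le) fun j => by
        rw [eLpNorm_sub_comm]; exact hφ₀ j
  obtain ⟨ns, -, hae⟩ := (tendstoInMeasure_of_tendsto_eLpNorm one_ne_zero
    (fun j => (φ₀ j).continuous.aestronglyMeasurable) hψ hL1).exists_seq_tendsto_ae
  let clip : ℝ → ℝ := fun y => max (-K) (min K y)
  have hclip : Continuous clip := by fun_prop
  refine ⟨fun j => clip ∘ φ₀ (ns j), fun j => hclip.comp (φ₀ _).continuous,
    fun j x => ?_, ?_⟩
  · have hK : 0 ≤ K := (abs_nonneg _).trans (hψK x)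
    exact abs_le.2 ⟨le_max_left _ _, max_le (by linarith) (min_le_left _ _)⟩
  · filter_upwards [hae] with x hx
    have hfix : clip (ψ x) = ψ x := by
      obtain ⟨h₁, h₂⟩ := abs_le.1 (hψK x)
      simp only [clip, min_eq_right h₂, max_eq_right h₁]
    rw [← hfix]
    exact (hclip.tendsto _).comp hx

theorem integral_abs_mul_le_of_forall_continuous {g : α → ℝ} (hg : Integrable g μ) {p c : ℝ}
    (hp : 0 < p)
    (H : ∀ (K : ℝ) (φ : α → ℝ), Continuous φ → (∀ x, |φ x| ≤ K) →
      ∫ x, |g x * φ x| ∂μ ≤ c * (∫ x, |φ x| ^ p ∂μ) ^ p⁻¹)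
    {K : ℝ} {ψ : α → ℝ} (hψ : AEStronglyMeasurable ψ μ) (hψK : ∀ x, |ψ x| ≤ K) :
    ∫ x, |g x * ψ x| ∂μ ≤ c * (∫ x, |ψ x| ^ p ∂μ) ^ p⁻¹ := by
  obtain ⟨φ, hφc, hφK, hφψ⟩ := exists_seq_continuous_abs_le_tendsto_ae hψ hψK
  have hpair : Tendsto (fun j => ∫ x, |g x * φ j x| ∂μ) atTop (𝓝 (∫ x, |g x * ψ x| ∂μ)) := by
    refine tendsto_integral_of_dominated_convergence (fun x => K * |g x|)
      (fun j => (hg.aestronglyMeasurable.mul (hφc j).aestronglyMeasurable).norm)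
      (hg.abs.const_mul K) (fun j => Eventually.of_forall fun x => ?_) ?_
    · rw [norm_abs_eq_norm, norm_mul, mul_comm, Real.norm_eq_abs, Real.norm_eq_abs]
      exact mul_le_mul_of_nonneg_right (hφK j x) (abs_nonneg _)
    · filter_upwards [hφψ] with x hx
      exact (hx.const_mul (g x)).abs
  have hnorm : Tendsto (fun j => ∫ x, |φ j x| ^ p ∂μ) atTop (𝓝 (∫ x, |ψ x| ^ p ∂μ)) := by
    refine tendsto_integral_of_dominated_convergence (fun _ => K ^ p)
      (fun j => ((hφc j).abs.rpow_const fun _ => Or.inr hp.le).aestronglyMeasurable)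
      (integrable_const _) (fun j => Eventually.of_forall fun x => ?_) ?_
    · rw [Real.norm_eq_abs, abs_of_nonneg (rpow_nonneg (abs_nonneg _) _)]
      exact rpow_le_rpow (abs_nonneg _) (hφK j x) hp.le
    · filter_upwards [hφψ] with x hx
      exact hx.abs.rpow_const (Or.inr hp.le)
  exact le_of_tendsto_of_tendsto' hpair ((hnorm.rpow_const (Or.inr (inv_pos.2 hp).le)).const_mul c)
    fun j => H K (φ j) (hφc j) (hφK j)

end Approximation

section ConverseHolder

variable {α : Type*} [MeasurableSpace α] {μ : Measure α} [IsFiniteMeasure μ] {g : α → ℝ}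
  {p q c : ℝ}

theorem integral_min_abs_rpow_rpow_inv_le (hg : Integrable g μ) (hpq : p.HolderConjugate q)
    (hc : 0 ≤ c)
    (H : ∀ (K : ℝ) (ψ : α → ℝ), AEStronglyMeasurable ψ μ → (∀ x, |ψ x| ≤ K) →
      ∫ x, |g x * ψ x| ∂μ ≤ c * (∫ x, |ψ x| ^ p ∂μ) ^ p⁻¹)
    {k : ℝ} (hk : 0 ≤ k) :
    (∫ x, min |g x| k ^ q ∂μ) ^ q⁻¹ ≤ c := by
  have hp := hpq.pos
  have hq := hpq.symm.pos
  let m : α → ℝ := fun x => min |g x| k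
  have hm0 (x : α) : 0 ≤ m x := le_min (abs_nonneg _) hk
  have hmmeas : AEMeasurable m μ := hg.aemeasurable.norm.min aemeasurable_const
  -- `g / |g|` is `sign g` (and `0` where `g = 0`): `ψ` is the extremal function for Hölder
  let ψ : α → ℝ := fun x => m x ^ (q - 1) * (g x / |g x|)
  have hψ_le (x : α) : |ψ x| ≤ m x ^ (q - 1) := abs_rpow_mul_div_abs_le (hm0 x) _ _
  have hψ_rpow (x : α) : |ψ x| ^ p ≤ m x ^ q :=
    calc |ψ x| ^ p ≤ (m x ^ (q - 1)) ^ p := rpow_le_rpow (abs_nonneg _) (hψ_le x) hp.le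
      _ = m x ^ q := by rw [← rpow_mul (hm0 x), hpq.symm.sub_one_mul_conj]
  have hψK (x : α) : |ψ x| ≤ k ^ (q - 1) :=
    (hψ_le x).trans (rpow_le_rpow (hm0 x) (min_le_right _ _) hpq.symm.sub_one_pos.le)
  have hψm : AEStronglyMeasurable ψ μ :=
    (hmmeas.pow_const (q - 1)).aestronglyMeasurable.mul
      (hg.aemeasurable.div hg.aemeasurable.norm).aestronglyMeasurable
  have hmq_int : Integrable (fun x => m x ^ q) μ :=
    .of_bound (hmmeas.pow_const q).aestronglyMeasurable (k ^ q) (ae_of_all _ fun x => by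
      rw [Real.norm_eq_abs, abs_of_nonneg (rpow_nonneg (hm0 x) _)]
      exact rpow_le_rpow (hm0 x) (min_le_right _ _) hq.le)
  have hgψ_int : Integrable (fun x => |g x * ψ x|) μ := by
    simpa only [mul_comm (ψ _)] using (hg.bdd_mul hψm (ae_of_all _ hψK)).abs
  refine rpow_inv_le_of_le_mul_rpow_inv hpq (integral_nonneg fun x => rpow_nonneg (hm0 x) _) hc ?_
  calc ∫ x, m x ^ q ∂μ ≤ ∫ x, |g x * ψ x| ∂μ :=
        integral_mono_of_nonneg (Eventually.of_forall fun x => rpow_nonneg (hm0 x) _)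
          hgψ_int (Eventually.of_forall fun x =>
            rpow_le_abs_mul_rpow_sub_one_mul_div_abs (hm0 x) (min_le_left _ _) hq)
    _ ≤ c * (∫ x, |ψ x| ^ p ∂μ) ^ p⁻¹ := H _ ψ hψm hψK
    _ ≤ c * (∫ x, m x ^ q ∂μ) ^ p⁻¹ := by
        refine mul_le_mul_of_nonneg_left (rpow_le_rpow
          (integral_nonneg fun x => rpow_nonneg (abs_nonneg _) _) ?_ (inv_nonneg.2 hp.le)) hc
        exact integral_mono_of_nonneg (Eventually.of_forall fun x => rpow_nonneg (abs_nonneg _) _)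
          hmq_int (Eventually.of_forall hψ_rpow)

theorem eLpNorm_le_of_integral_abs_mul_le (hg : Integrable g μ) (hpq : p.HolderConjugate q)
    (hc : 0 ≤ c)
    (H : ∀ (K : ℝ) (ψ : α → ℝ), AEStronglyMeasurable ψ μ → (∀ x, |ψ x| ≤ K) →
      ∫ x, |g x * ψ x| ∂μ ≤ c * (∫ x, |ψ x| ^ p ∂μ) ^ p⁻¹) :
    eLpNorm g (ENNReal.ofReal q) μ ≤ ENNReal.ofReal c := by
  have hq := hpq.symm.pos
  let m : ℕ → α → ℝ := fun k x => min |g x| k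
  have hmeas (k : ℕ) : AEStronglyMeasurable (m k) μ :=
    hg.aestronglyMeasurable.norm.inf aestronglyMeasurable_const
  have htrunc (k : ℕ) : eLpNorm (m k) (ENNReal.ofReal q) μ ≤ ENNReal.ofReal c := by
    have hm0 (x : α) : 0 ≤ m k x := le_min (abs_nonneg _) k.cast_nonneg
    have hmLp : MemLp (m k) (ENNReal.ofReal q) μ :=
      MemLp.of_bound (hmeas k) k (Eventually.of_forall fun x => by
        rw [Real.norm_eq_abs, abs_of_nonneg (hm0 x)]; exact min_le_right _ _)
    rw [hmLp.eLpNorm_eq_integral_rpow_norm (by simpa using hq) ENNReal.ofReal_ne_top,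
      ENNReal.toReal_ofReal hq.le]
    refine ENNReal.ofReal_le_ofReal ?_
    simp_rw [Real.norm_eq_abs, abs_of_nonneg (hm0 _)]
    exact integral_min_abs_rpow_rpow_inv_le hg hpq hc H k.cast_nonneg
  calc eLpNorm g (ENNReal.ofReal q) μ = eLpNorm (fun x => |g x|) (ENNReal.ofReal q) μ :=
        (eLpNorm_norm g).symm
    _ ≤ atTop.liminf fun k => eLpNorm (m k) (ENNReal.ofReal q) μ := by
        refine Lp.eLpNorm_lim_le_liminf_eLpNorm hmeas _ (Eventually.of_forall fun x => ?_)
        refine tendsto_atTop_of_eventually_const (i₀ := ⌈|g x|⌉₊) fun k hk => ?_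
        exact min_eq_left ((Nat.le_ceil _).trans (Nat.cast_le.2 hk))
    _ ≤ ENNReal.ofReal c := liminf_le_of_frequently_le' (Frequently.of_forall htrunc)

end ConverseHolder

section QuadraticForm

variable {ι E : Type*} [Fintype ι] [MeasurableSpace E] {μ : Measure E}
  {D : E → Matrix ι ι ℝ} {v : E → ι → ℝ} {β : ℝ}

theorem integral_abs_dotProduct_le_of_affine_bound [TopologicalSpace E] {s : Set E} {C : ℝ}
    (hβ : 0 < β)
    (hest : ∀ Φ : E → ι → ℝ, ContinuousOn Φ s →
      ∫ x, |v x ⬝ᵥ Φ x| ∂μ ≤ C * ((∫ x, |Φ x ⬝ᵥ D x *ᵥ Φ x| ^ β ∂μ) + 1)) :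
    ∀ Φ : E → ι → ℝ, ContinuousOn Φ s →
      ∫ x, |v x ⬝ᵥ Φ x| ∂μ ≤ 2 * C * (∫ x, |Φ x ⬝ᵥ D x *ᵥ Φ x| ^ β ∂μ) ^ (2 * β)⁻¹ := by
  intro Φ hΦ
  refine le_two_mul_mul_rpow_inv_of_forall_mul_le (by positivity)
    (integral_nonneg fun x => rpow_nonneg (abs_nonneg _) _) fun t ht => ?_
  have hlin (x : E) : |v x ⬝ᵥ t • Φ x| = t * |v x ⬝ᵥ Φ x| := by
    rw [dotProduct_smul, smul_eq_mul, abs_mul, abs_of_pos ht]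
  have hquad (x : E) :
      |t • Φ x ⬝ᵥ D x *ᵥ t • Φ x| ^ β = t ^ (2 * β) * |Φ x ⬝ᵥ D x *ᵥ Φ x| ^ β := by
    rw [mulVec_smul, dotProduct_smul, smul_dotProduct, smul_eq_mul, smul_eq_mul, ← mul_assoc,
      abs_mul, abs_of_pos (mul_pos ht ht), mul_rpow (mul_pos ht ht).le (abs_nonneg _),
      ← sq, ← rpow_natCast, ← rpow_mul ht.le, Nat.cast_ofNat]
  simpa only [hlin, hquad, integral_const_mul] using hest (fun x => t • Φ x) (hΦ.const_smul t)

theorem integral_abs_apply_mul_le_of_homogeneous_bound [TopologicalSpace E]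
    [OpensMeasurableSpace E] [IsFiniteMeasure μ] [DecidableEq ι] {s : Set E} {c M : ℝ}
    (hβ : 0 < β) (hc : 0 ≤ c) (hM : 0 ≤ M) {i : ι} (hD : ∀ᵐ x ∂μ, |D x i i| ≤ M)
    (hhom : ∀ Φ : E → ι → ℝ, ContinuousOn Φ s →
      ∫ x, |v x ⬝ᵥ Φ x| ∂μ ≤ c * (∫ x, |Φ x ⬝ᵥ D x *ᵥ Φ x| ^ β ∂μ) ^ (2 * β)⁻¹)
    {K : ℝ} {φ : E → ℝ} (hφ : Continuous φ) (hφK : ∀ x, |φ x| ≤ K) :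
    ∫ x, |v x i * φ x| ∂μ ≤ c * (M ^ β) ^ (2 * β)⁻¹ * (∫ x, |φ x| ^ (2 * β) ∂μ) ^ (2 * β)⁻¹ := by
  let e : ι → ℝ := Pi.single i 1
  have hlin (x : E) : v x ⬝ᵥ φ x • e = v x i * φ x := by
    rw [dotProduct_smul, dotProduct_single, mul_one, smul_eq_mul, mul_comm]
  have hquad (x : E) : φ x • e ⬝ᵥ D x *ᵥ φ x • e = φ x * φ x * D x i i := by
    rw [mulVec_smul, dotProduct_smul, smul_dotProduct, mulVec_single_one, single_dotProduct,
      col_apply, smul_eq_mul, smul_eq_mul]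
    ring
  have hquad_le : ∀ᵐ x ∂μ, |φ x • e ⬝ᵥ D x *ᵥ φ x • e| ^ β ≤ M ^ β * |φ x| ^ (2 * β) := by
    filter_upwards [hD] with x hx
    calc |φ x • e ⬝ᵥ D x *ᵥ φ x • e| ^ β = (|φ x| ^ 2 * |D x i i|) ^ β := by
          rw [hquad, abs_mul, abs_mul, sq]
      _ ≤ (M * |φ x| ^ 2) ^ β := by
          rw [mul_comm M]
          exact rpow_le_rpow (by positivity) (by gcongr) hβ.le
      _ = M ^ β * |φ x| ^ (2 * β) := by
          rw [mul_rpow hM (sq_nonneg _), ← rpow_natCast, ← rpow_mul (abs_nonneg _), Nat.cast_ofNat]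
  have hint : Integrable (fun x => M ^ β * |φ x| ^ (2 * β)) μ := by
    refine ((integrable_const (K ^ (2 * β))).mono'
      (hφ.abs.rpow_const fun _ => Or.inr (by positivity)).aestronglyMeasurable
      (Eventually.of_forall fun x => ?_)).const_mul _
    rw [Real.norm_eq_abs, abs_of_nonneg (rpow_nonneg (abs_nonneg _) _)]
    exact rpow_le_rpow (abs_nonneg _) (hφK x) (by positivity)
  calc ∫ x, |v x i * φ x| ∂μ = ∫ x, |v x ⬝ᵥ φ x • e| ∂μ := by simp only [hlin]
    _ ≤ c * (∫ x, |φ x • e ⬝ᵥ D x *ᵥ φ x • e| ^ β ∂μ) ^ (2 * β)⁻¹ :=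
        hhom _ (hφ.smul continuous_const).continuousOn
    _ ≤ c * (∫ x, M ^ β * |φ x| ^ (2 * β) ∂μ) ^ (2 * β)⁻¹ := by
        refine mul_le_mul_of_nonneg_left (rpow_le_rpow
          (integral_nonneg fun x => rpow_nonneg (abs_nonneg _) _) ?_ (by positivity)) hc
        exact integral_mono_of_nonneg
          (Eventually.of_forall fun x => rpow_nonneg (abs_nonneg _) _) hint hquad_le
    _ = c * (M ^ β) ^ (2 * β)⁻¹ * (∫ x, |φ x| ^ (2 * β) ∂μ) ^ (2 * β)⁻¹ := by
        rw [integral_const_mul, mul_rpow (rpow_nonneg hM _)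
          (integral_nonneg fun x => rpow_nonneg (abs_nonneg _) _), mul_assoc]

end QuadraticForm

theorem stmt2_general (n : ℕ) (Ω : Set (Fin n → ℝ)) (hΩ : IsOpen Ω) (hΩb : Bornology.IsBounded Ω)
    (β : ℝ) (hβ1 : 1/2 < β) (hβ2 : β < 1)
    (D : (Fin n → ℝ) → Matrix (Fin n) (Fin n) ℝ)
    (hDc : ContinuousOn D (closure Ω))
    (divD : (Fin n → ℝ) → (Fin n → ℝ))
    (hdivD : IntegrableOn divD Ω)
    (C : ℝ) (hC : 0 ≤ C)
    (hest : ∀ Φ : (Fin n → ℝ) → (Fin n → ℝ), ContinuousOn Φ (closure Ω) →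
      ∫ x in Ω, |divD x ⬝ᵥ Φ x|
        ≤ C * ((∫ x in Ω, |Φ x ⬝ᵥ (D x).mulVec (Φ x)| ^ β) + 1)) :
    MemLp divD (ENNReal.ofReal (2 * β / (2 * β - 1))) (volume.restrict Ω) ∧
      MemLp divD 2 (volume.restrict Ω) := by
  have hβ : 0 < β := by linarith
  have : IsFiniteMeasure (volume.restrict Ω) := isFiniteMeasure_restrict.2 hΩb.measure_lt_top.ne
  have hpq : (2 * β).HolderConjugate (2 * β / (2 * β - 1)) :=
    (Real.holderConjugate_iff_eq_conjExponent (by linarith)).2 rfl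
  have hhom := integral_abs_dotProduct_le_of_affine_bound hβ hest
  have hcomp (i : Fin n) :
      MemLp (fun x => divD x i) (ENNReal.ofReal (2 * β / (2 * β - 1))) (volume.restrict Ω) := by
    obtain ⟨M, hM⟩ := hΩb.isCompact_closure.exists_bound_of_continuousOn
      ((continuous_id.matrix_elem i i).comp_continuousOn hDc)
    have hD : ∀ᵐ x ∂volume.restrict Ω, |D x i i| ≤ max M 0 :=
      ae_restrict_of_forall_mem hΩ.measurableSet fun x hx =>
        (hM x (subset_closure hx)).trans (le_max_left _ _)
    have hg : Integrable (fun x => divD x i) (volume.restrict Ω) := hdivD.eval i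
    have hnorm := eLpNorm_le_of_integral_abs_mul_le hg hpq (by positivity)
      fun K ψ hψ hψK => integral_abs_mul_le_of_forall_continuous hg (by positivity)
        (fun K φ hφ hφK => integral_abs_apply_mul_le_of_homogeneous_bound hβ (by positivity)
          (le_max_right M 0) hD hhom hφ hφK) hψ hψK
    exact ⟨hg.aestronglyMeasurable, hnorm.trans_lt ENNReal.ofReal_lt_top⟩
  have hvec := memLp_pi_iff.2 hcomp
  refine ⟨hvec, hvec.mono_exponent ?_⟩
  rw [← ENNReal.ofReal_ofNat, ENNReal.ofReal_le_ofReal_iff hpq.symm.pos.le,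
    le_div_iff₀ (by linarith)]
  linarith

/-- the divergence estimate implies `∇·D ∈ L^{2β/(2β-1)} ⊆ L²`. -/
theorem stmt2 (n : ℕ) (Ω : Set (Fin n → ℝ)) (hΩ : IsOpen Ω) (hΩb : Bornology.IsBounded Ω)
    (β : ℝ) (hβ1 : 1/2 < β) (hβ2 : β < 1)
    (D : (Fin n → ℝ) → Matrix (Fin n) (Fin n) ℝ)
    (hDc : ContinuousOn D (closure Ω))
    (hDpsd : ∀ x ∈ closure Ω, (D x).PosSemidef)
    (divD : (Fin n → ℝ) → (Fin n → ℝ))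
    (hdivD : IntegrableOn divD Ω)
    (C : ℝ) (hC : 0 ≤ C)
    (hest : ∀ Φ : (Fin n → ℝ) → (Fin n → ℝ), ContinuousOn Φ (closure Ω) →
      ∫ x in Ω, |divD x ⬝ᵥ Φ x|
        ≤ C * ((∫ x in Ω, |Φ x ⬝ᵥ (D x).mulVec (Φ x)| ^ β) + 1)) :
    MemLp divD (ENNReal.ofReal (2 * β / (2 * β - 1))) (volume.restrict Ω) ∧
      MemLp divD 2 (volume.restrict Ω) :=
  stmt2_general n Ω hΩ hΩb β hβ1 hβ2 D hDc divD hdivD C hC hest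
end

section
/- Let Ω be a bounded domain, r ≥ 2, D positive semidefinite continuous, and u ∈ C¹(closure(Ω)) with u > 0. Then ∫_Ω (∇u · D∇u)^{r/(r+1)} ≤ r ∫_Ω u^r ln u + |Ω| + ∫_Ω (∇u · D∇u)/u. -/
open MeasureTheory Real Matrix

/-- Gradient of a scalar field via `fderiv`. -/
noncomputable def grad {n : ℕ} (f : (Fin n → ℝ) → ℝ) (x : Fin n → ℝ) : Fin n → ℝ :=
  fun i => fderiv ℝ f x (Pi.single i 1)

open Filter Set Topology

/-! With `Q = ∇u·D∇u ≥ 0`, Young's inequality with exponents `r + 1` and `(r + 1)/r` applied to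
`Q^{r/(r+1)} = (u^r)^{1/(r+1)} (Q/u)^{r/(r+1)}` gives `Q^{r/(r+1)} ≤ u^r + Q/u` pointwise, and
`u^r ≤ r u^r ln u + 1`. Integrating is legitimate because on the compact set `closure Ω` the
gradient of the `C¹` function `u` and the continuous `D` are bounded and `u` is bounded away
from `0`, so `Q/u` is bounded on `Ω`. -/

namespace Real

theorem rpow_le_mul_rpow_mul_log_add_one {z : ℝ} (hz : 0 ≤ z) (r : ℝ) :
    z ^ r ≤ r * (z ^ r * log z) + 1 := by
  rcases hz.eq_or_lt with rfl | hz
  · rcases eq_or_ne r 0 with rfl | hr <;> simp [*]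
  -- with `t = r log z` this is `eᵗ (1 - t) ≤ 1`, i.e. `1 - t ≤ e⁻ᵗ`
  have key := mul_le_mul_of_nonneg_left (add_one_le_exp (-(r * log z))) (exp_pos (r * log z)).le
  rw [← exp_add, add_neg_cancel, exp_zero] at key
  rw [rpow_def_of_pos hz, mul_comm (log z) r]
  linarith

theorem rpow_div_add_one_le_rpow_add_div {q z r : ℝ} (hq : 0 ≤ q) (hz : 0 < z) (hr : 0 ≤ r) :
    q ^ (r / (r + 1)) ≤ z ^ r + q / z := by
  have hr1 : 0 < r + 1 := by linarith
  have hzr : 0 ≤ z ^ r := rpow_nonneg hz.le r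
  have hqz : 0 ≤ q / z := div_nonneg hq hz.le
  have hw₁ : 0 ≤ 1 / (r + 1) := by positivity
  have hw₂ : 0 ≤ r / (r + 1) := by positivity
  have hsplit : q ^ (r / (r + 1)) = (z ^ r) ^ (1 / (r + 1)) * (q / z) ^ (r / (r + 1)) := by
    rw [div_rpow hq hz.le, ← rpow_mul hz.le, mul_one_div,
      mul_div_cancel₀ _ (rpow_pos_of_pos hz _).ne']
  have young := geom_mean_le_arith_mean2_weighted hw₁ hw₂ hzr hqz
    (by rw [← add_div, add_comm, div_self hr1.ne'])
  rw [← hsplit] at young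
  have h₁ : 1 / (r + 1) * z ^ r ≤ z ^ r :=
    mul_le_of_le_one_left hzr ((div_le_one hr1).2 (by linarith))
  have h₂ : r / (r + 1) * (q / z) ≤ q / z :=
    mul_le_of_le_one_left hqz ((div_le_one hr1).2 (by linarith))
  linarith

end Real

section FDerivBound

variable {𝕜 : Type*} [NontriviallyNormedField 𝕜] {E F : Type*} [NormedAddCommGroup E]
  [NormedSpace 𝕜 E] [NormedAddCommGroup F] [NormedSpace 𝕜 F] {f : E → F} {s : Set E}

theorem ContDiffWithinAt.exists_mem_nhdsWithin_norm_fderiv_le {x : E}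
    (hf : ContDiffWithinAt 𝕜 1 f s x) (hx : x ∈ s) :
    ∃ t ∈ 𝓝[s] x, ∃ C, ∀ y ∈ t ∩ interior s, ‖fderiv 𝕜 f y‖ ≤ C := by
  obtain ⟨t, ht, -, f', hf', hf'c⟩ :=
    (contDiffWithinAt_succ_iff_hasFDerivWithinAt (n := 0) (by simp)).1 (by simpa using hf)
  rw [insert_eq_of_mem hx] at ht
  have hbound : ∀ᶠ y in 𝓝[s] x, ‖f' y‖ < ‖f' x‖ + 1 :=
    nhdsWithin_le_of_mem ht (hf'c.continuousWithinAt.norm.eventually_lt_const (lt_add_one _))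
  have hnhds : ∀ᶠ y in 𝓝[s] x, t ∈ 𝓝[s] y := eventually_eventually_nhdsWithin.2 ht
  refine ⟨_, hbound.and (hnhds.and ht), ‖f' x‖ + 1, ?_⟩
  rintro y ⟨⟨hy, hty, hyt⟩, hys⟩
  have htnhds : t ∈ 𝓝 y := nhdsWithin_eq_nhds.2 (mem_interior_iff_mem_nhds.1 hys) ▸ hty
  rw [((hf' y hyt).hasFDerivAt htnhds).fderiv]
  exact hy.le

theorem IsCompact.exists_bound_norm_fderiv (hs : IsCompact s) (hf : ContDiffOn 𝕜 1 f s) :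
    ∃ C, ∀ x ∈ interior s, ‖fderiv 𝕜 f x‖ ≤ C := by
  obtain ⟨C, hC⟩ := hs.induction_on
    (p := fun t => ∃ C, ∀ x ∈ t ∩ interior s, ‖fderiv 𝕜 f x‖ ≤ C) ⟨0, by simp⟩
    (fun t₁ t₂ h ⟨C, hC⟩ => ⟨C, fun x hx => hC x ⟨h hx.1, hx.2⟩⟩)
    (fun t₁ t₂ ⟨C₁, hC₁⟩ ⟨C₂, hC₂⟩ => ⟨max C₁ C₂, fun x ⟨hx, hxs⟩ => hx.elim
      (fun h => (hC₁ x ⟨h, hxs⟩).trans (le_max_left _ _))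
      (fun h => (hC₂ x ⟨h, hxs⟩).trans (le_max_right _ _))⟩)
    (fun x hx => (hf x hx).exists_mem_nhdsWithin_norm_fderiv_le hx)
  exact ⟨C, fun x hx => hC x ⟨interior_subset hx, hx⟩⟩

end FDerivBound

section Grad

variable {n : ℕ} {f : (Fin n → ℝ) → ℝ}

theorem norm_grad_le_norm_fderiv (x : Fin n → ℝ) :
    ‖grad f x‖ ≤ ‖fderiv ℝ f x‖ :=
  (pi_norm_le_iff_of_nonneg (norm_nonneg _)).2 fun _ =>
    ((fderiv ℝ f x).le_opNorm _).trans_eq (by rw [Pi.norm_single, norm_one, mul_one])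

theorem ContDiffOn.continuousOn_grad {s : Set (Fin n → ℝ)} (hf : ContDiffOn ℝ 1 f s)
    (hs : IsOpen s) : ContinuousOn (grad f) s :=
  continuousOn_pi.2 fun _ =>
    (hf.continuousOn_fderiv_of_isOpen hs le_rfl).clm_apply continuousOn_const

theorem ContDiffOn.continuousOn_grad_dotProduct_mulVec {s : Set (Fin n → ℝ)}
    (hf : ContDiffOn ℝ 1 f s) (hs : IsOpen s) {D : (Fin n → ℝ) → Matrix (Fin n) (Fin n) ℝ}
    (hD : ContinuousOn D s) : ContinuousOn (fun x => grad f x ⬝ᵥ D x *ᵥ grad f x) s := by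
  have := hf.continuousOn_grad hs
  fun_prop

end Grad

theorem IsCompact.exists_bound_grad_dotProduct_mulVec_div {n : ℕ} {K : Set (Fin n → ℝ)}
    (hK : IsCompact K) {D : (Fin n → ℝ) → Matrix (Fin n) (Fin n) ℝ} (hD : ContinuousOn D K)
    {u : (Fin n → ℝ) → ℝ} (hu : ContDiffOn ℝ 1 u K) (hu0 : ∀ x ∈ K, u x ≠ 0) :
    ∃ C, ∀ x ∈ interior K, ‖(grad u x ⬝ᵥ D x *ᵥ grad u x) / u x‖ ≤ C := by
  obtain ⟨M, hM⟩ := hK.exists_bound_norm_fderiv hu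
  -- `x ↦ (∇u x, D x, u x)` maps `interior K` into a compact set avoiding `u = 0`
  set S : Set ((Fin n → ℝ) × Matrix (Fin n) (Fin n) ℝ × ℝ) :=
    Metric.closedBall 0 M ×ˢ ((D '' K) ×ˢ (u '' K))
  have hS : IsCompact S := (isCompact_closedBall _ _).prod
    ((hK.image_of_continuousOn hD).prod (hK.image_of_continuousOn hu.continuousOn))
  have hS0 : ∀ p ∈ S, p.2.2 ≠ 0 := by
    rintro p ⟨-, -, y, hy, hyp⟩
    exact hyp ▸ hu0 y hy
  have hΨ : ContinuousOn (fun p : (Fin n → ℝ) × Matrix (Fin n) (Fin n) ℝ × ℝ =>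
      (p.1 ⬝ᵥ p.2.1 *ᵥ p.1) / p.2.2) S := by
    fun_prop (disch := assumption)
  obtain ⟨C, hC⟩ := hS.exists_bound_of_continuousOn hΨ
  refine ⟨C, fun x hx => hC (grad u x, D x, u x) ⟨?_, ?_, ?_⟩⟩
  · exact mem_closedBall_zero_iff.2 ((norm_grad_le_norm_fderiv x).trans (hM x hx))
  all_goals exact mem_image_of_mem _ (interior_subset hx)

theorem integrableOn_grad_dotProduct_mulVec_div {n : ℕ} {Ω : Set (Fin n → ℝ)} (hΩ : IsOpen Ω)
    (hΩb : Bornology.IsBounded Ω) {D : (Fin n → ℝ) → Matrix (Fin n) (Fin n) ℝ}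
    (hD : ContinuousOn D (closure Ω)) {u : (Fin n → ℝ) → ℝ} (hu : ContDiffOn ℝ 1 u (closure Ω))
    (hu0 : ∀ x ∈ closure Ω, u x ≠ 0) :
    IntegrableOn (fun x => (grad u x ⬝ᵥ D x *ᵥ grad u x) / u x) Ω := by
  obtain ⟨C, hC⟩ := hΩb.isCompact_closure.exists_bound_grad_dotProduct_mulVec_div hD hu hu0
  have hcont : ContinuousOn (fun x => (grad u x ⬝ᵥ D x *ᵥ grad u x) / u x) Ω :=
    ((hu.mono subset_closure).continuousOn_grad_dotProduct_mulVec hΩ (hD.mono subset_closure)).div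
      (hu.continuousOn.mono subset_closure) fun x hx => hu0 x (subset_closure hx)
  refine .of_bound hΩb.measure_lt_top (hcont.aestronglyMeasurable hΩ.measurableSet) C ?_
  exact (ae_restrict_iff' hΩ.measurableSet).2
    (.of_forall fun x hx => hC x (hΩ.subset_interior_closure hx))

theorem setIntegral_le_add_of_le {α : Type*} [MeasurableSpace α] {μ : Measure α} {s : Set α}
    {f g h : α → ℝ} (hs : MeasurableSet s) (hf : AEStronglyMeasurable f (μ.restrict s))
    (hf0 : ∀ x ∈ s, 0 ≤ f x) (hg : IntegrableOn g s μ) (hh : IntegrableOn h s μ)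
    (hfgh : ∀ x ∈ s, f x ≤ g x + h x) :
    ∫ x in s, f x ∂μ ≤ (∫ x in s, g x ∂μ) + ∫ x in s, h x ∂μ := by
  have hf' : IntegrableOn f s μ := Integrable.mono' (hg.add hh) hf <|
    (ae_restrict_iff' hs).2 (.of_forall fun x hx =>
      (norm_of_nonneg (hf0 x hx)).trans_le (hfgh x hx))
  rw [← integral_add hg hh]
  exact setIntegral_mono_on hf' (hg.add hh) hs hfgh

/-- Young-type estimate
`∫ (∇u·D∇u)^{r/(r+1)} ≤ r ∫ u^r ln u + |Ω| + ∫ (∇u·D∇u)/u`. -/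
theorem stmt12 (n : ℕ) (Ω : Set (Fin n → ℝ)) (hΩ : IsOpen Ω) (hΩb : Bornology.IsBounded Ω)
    (r : ℝ) (hr : 2 ≤ r)
    (D : (Fin n → ℝ) → Matrix (Fin n) (Fin n) ℝ)
    (hDc : ContinuousOn D (closure Ω))
    (hDpsd : ∀ x ∈ closure Ω, (D x).PosSemidef)
    (u : (Fin n → ℝ) → ℝ)
    (hu : ContDiffOn ℝ 1 u (closure Ω))
    (hupos : ∀ x ∈ closure Ω, 0 < u x) :
    ∫ x in Ω, (grad u x ⬝ᵥ (D x).mulVec (grad u x)) ^ (r / (r + 1))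
      ≤ r * (∫ x in Ω, u x ^ r * Real.log (u x)) + (volume Ω).toReal
        + ∫ x in Ω, (grad u x ⬝ᵥ (D x).mulVec (grad u x)) / u x := by
  set Q : (Fin n → ℝ) → ℝ := fun x => grad u x ⬝ᵥ (D x).mulVec (grad u x)
  have hu0 : ∀ x ∈ closure Ω, u x ≠ 0 := fun x hx => (hupos x hx).ne'
  have hQ0 : ∀ x ∈ Ω, 0 ≤ Q x := fun x hx =>
    (hDpsd x (subset_closure hx)).dotProduct_mulVec_nonneg _
  have hQc : ContinuousOn Q Ω :=
    (hu.mono subset_closure).continuousOn_grad_dotProduct_mulVec hΩ (hDc.mono subset_closure)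
  have hlog : IntegrableOn (fun x => u x ^ r * log (u x)) Ω :=
    (((hu.continuousOn.rpow_const fun x hx => Or.inl (hu0 x hx)).mul (hu.continuousOn.log hu0)
      ).integrableOn_compact hΩb.isCompact_closure).mono_set subset_closure
  have hconst : IntegrableOn (fun _ => (1 : ℝ)) Ω := integrableOn_const hΩb.measure_lt_top.ne
  have hpt : ∀ x ∈ Ω, Q x ^ (r / (r + 1)) ≤ r * (u x ^ r * log (u x)) + 1 + Q x / u x := by
    intro x hx
    have hux := hupos x (subset_closure hx)
    have := rpow_le_mul_rpow_mul_log_add_one hux.le r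
    have := rpow_div_add_one_le_rpow_add_div (hQ0 x hx) hux (r := r) (by linarith)
    linarith
  calc ∫ x in Ω, Q x ^ (r / (r + 1))
      ≤ (∫ x in Ω, r * (u x ^ r * log (u x)) + 1) + ∫ x in Ω, Q x / u x :=
        setIntegral_le_add_of_le hΩ.measurableSet
          ((hQc.rpow_const fun _ _ => Or.inr (by positivity)).aestronglyMeasurable
            hΩ.measurableSet)
          (fun x hx => rpow_nonneg (hQ0 x hx) _) ((hlog.const_mul r).add hconst)
          (integrableOn_grad_dotProduct_mulVec_div hΩ hΩb hDc hu hu0) hpt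
    _ = r * (∫ x in Ω, u x ^ r * log (u x)) + (volume Ω).toReal + ∫ x in Ω, Q x / u x := by
        rw [integral_add (hlog.const_mul r) hconst, integral_const_mul, setIntegral_const,
          smul_eq_mul, mul_one, Measure.real]
end

section
/- Let D' = (d'_{ij}) be a smooth symmetric n×n matrix field and define D = (d_{ij}) by d_{ii} = d'_{ii} + Σ_{l,k} d'_{lk} and d_{ij} = d'_{ij} for i ≠ j. If each d'_{ij} satisfies the boundary condition ∇d'_{ij}·ν + (1/2)(∂_{x_i} d'_{ij})ν_j + (1/2)(∂_{x_j} d'_{ij})ν_i = 0 on ∂Ω, then (∇·D)·ν = 0 on ∂Ω, where ∇·D = (∇·D_1, …, ∇·D_n) is the column-wise divergence. -/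
open MeasureTheory Real Matrix

/-- the modified matrix field `D` built from `D'` has vanishing
normal divergence on the boundary, given the mixed boundary conditions for the
entries of `D'`. -/
theorem stmt15 (n : ℕ) (Ω : Set (Fin n → ℝ)) (hΩ : IsOpen Ω) (hΩb : Bornology.IsBounded Ω)
    (D' : (Fin n → ℝ) → Matrix (Fin n) (Fin n) ℝ)
    (hD'smooth : ∀ i j, ContDiff ℝ (⊤ : ℕ∞) (fun x => D' x i j))
    (hD'symm : ∀ x i j, D' x i j = D' x j i)
    (D : (Fin n → ℝ) → Matrix (Fin n) (Fin n) ℝ)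
    (hD : ∀ x i j, D x i j =
      if i = j then D' x i i + ∑ l, ∑ k, D' x l k else D' x i j)
    -- `ν` the outward unit normal of `Ω`
    (ν : (Fin n → ℝ) → (Fin n → ℝ))
    (hbc : ∀ x ∈ frontier Ω, ∀ i j,
      (∑ m, fderiv ℝ (fun y => D' y i j) x (Pi.single m 1) * ν x m)
        + (1/2) * fderiv ℝ (fun y => D' y i j) x (Pi.single i 1) * ν x j
        + (1/2) * fderiv ℝ (fun y => D' y i j) x (Pi.single j 1) * ν x i = 0) :
    ∀ x ∈ frontier Ω,
      (fun i => ∑ j, fderiv ℝ (fun y => D y i j) x (Pi.single j 1)) ⬝ᵥ ν x = 0 := by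
  intro x hx
  have hdiff : ∀ i j, DifferentiableAt ℝ (fun y => D' y i j) x :=
    fun i j => ((hD'smooth i j).differentiable (by simp)).differentiableAt
  set d : Fin n → Fin n → Fin n → ℝ :=
    fun i j m => fderiv ℝ (fun y => D' y i j) x (Pi.single m 1) with hd
  have hsym : ∀ i j m, d i j m = d j i m := by
    intro i j m
    have h : (fun y => D' y i j) = (fun y => D' y j i) := funext fun y => hD'symm y i j
    simp only [hd, h]
  have hS : DifferentiableAt ℝ (fun y => ∑ l, ∑ k, D' y l k) x :=
    DifferentiableAt.fun_sum fun l _ => DifferentiableAt.fun_sum fun k _ => hdiff l k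
  have hSfd : ∀ m, fderiv ℝ (fun y => ∑ l, ∑ k, D' y l k) x (Pi.single m 1)
      = ∑ l, ∑ k, d l k m := by
    intro m
    rw [fderiv_fun_sum (fun l _ => DifferentiableAt.fun_sum fun k _ => hdiff l k)]
    rw [ContinuousLinearMap.sum_apply]
    refine Finset.sum_congr rfl fun l _ => ?_
    rw [fderiv_fun_sum (fun k _ => hdiff l k), ContinuousLinearMap.sum_apply]
  have hDfd : ∀ i j m, fderiv ℝ (fun y => D y i j) x (Pi.single m 1)
      = d i j m + if i = j then ∑ l, ∑ k, d l k m else 0 := by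
    intro i j m
    by_cases h : i = j
    · subst h
      have heq : (fun y => D y i i) = fun y => D' y i i + ∑ l, ∑ k, D' y l k :=
        funext fun y => by simpa using hD y i i
      rw [heq, fderiv_fun_add (hdiff i i) hS, if_pos rfl, ContinuousLinearMap.add_apply, hSfd]
    · have heq : (fun y => D y i j) = fun y => D' y i j :=
        funext fun y => by simpa [h] using hD y i j
      rw [heq, if_neg h, add_zero]
  have key : ∀ i j, (∑ m, d i j m * ν x m)
      = -((1/2) * d i j i * ν x j + (1/2) * d i j j * ν x i) := by
    intro i j
    have := hbc x hx i j
    simp only [hd]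
    linarith
  simp only [dotProduct, hDfd]
  have expand : ∀ i, (∑ j, (d i j j + if i = j then ∑ l, ∑ k, d l k j else 0)) * ν x i
      = (∑ j, d i j j) * ν x i + (∑ l, ∑ k, d l k i) * ν x i := by
    intro i
    rw [Finset.sum_add_distrib, add_mul]
    congr 2
    simp
  rw [Finset.sum_congr rfl fun i _ => expand i, Finset.sum_add_distrib]
  have h1 : ∑ i, (∑ l, ∑ k, d l k i) * ν x i
      = ∑ l, ∑ k, ∑ i, d l k i * ν x i := by
    have hpush : ∀ i, (∑ l, ∑ k, d l k i) * ν x i = ∑ l, ∑ k, d l k i * ν x i := by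
      intro i
      rw [Finset.sum_mul]
      exact Finset.sum_congr rfl fun l _ => Finset.sum_mul _ _ _
    simp only [hpush]
    rw [Finset.sum_comm]
    exact Finset.sum_congr rfl fun l _ => Finset.sum_comm
  have h2 : ∑ l, ∑ k, ∑ i, d l k i * ν x i
      = -(∑ l, ∑ k, ((1/2) * d l k l * ν x k + (1/2) * d l k k * ν x l)) := by
    simp only [key, Finset.sum_neg_distrib]
  have h3 : ∑ l, ∑ k, (1/2 : ℝ) * d l k l * ν x k = ∑ l, ∑ k, (1/2 : ℝ) * d l k k * ν x l := by
    rw [Finset.sum_comm]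
    refine Finset.sum_congr rfl fun l _ => Finset.sum_congr rfl fun k _ => ?_
    rw [hsym k l]
  have h4 : ∑ i, (∑ j : Fin n, d i j j) * ν x i = ∑ l, ∑ k, d l k k * ν x l := by
    refine Finset.sum_congr rfl fun l _ => ?_
    rw [Finset.sum_mul]
  have h5 : ∑ l, ∑ k, (1/2 : ℝ) * d l k k * ν x l
      = (1/2) * ∑ l, ∑ k, d l k k * ν x l := by
    rw [Finset.mul_sum]
    refine Finset.sum_congr rfl fun l _ => ?_
    rw [Finset.mul_sum]
    exact Finset.sum_congr rfl fun k _ => by ring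
  rw [h1, h2, h4]
  simp only [Finset.sum_add_distrib, h3, h5]
  ring
end

section
/- Let w : closure(Ω) × [0,T) → (0,∞) be C¹ in t and C¹ in x, u ≥ 0 continuous, D continuous positive semidefinite, and suppose w_t = -uw. Then (1/2) d/dt ∫_Ω (∇w · D∇w)/w = -(1/2) ∫_Ω u (∇w · D∇w)/w - ∫_Ω ∇u · D∇w ≤ -∫_Ω ∇u · D∇w. -/
/-!
Solving the ODE `w_t = -u w` pointwise gives `w(x, t) = w(x, 0) e^{-u(x) t}` on `closure Ω`, and
since `Ω` is open the spatial gradients agree there as well. This explicit family is smooth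
enough jointly in `(t, x)` (`w` itself is only known to be regular in `t` and in `x` separately)
for the time derivative of the integrand to be continuous on `ℝ × closure Ω`, hence bounded on
the compact sets `[t - 1, t + 1] × closure Ω`, which justifies differentiating under the integral sign. Pointwise, `∇w_t = -u ∇w - w ∇u`,
`w_t = -u w` and the symmetry of `D` give
`(∇w·D∇w / w)_t = -u (∇w·D∇w) / w - 2 ∇u·D∇w`. The dropped term `u (∇w·D∇w) / w` is
nonnegative because `u ≥ 0`, `w > 0` and `D` is positive semidefinite.
-/

open MeasureTheory Real Matrix Set

section VectorCalculus

variable {𝕜 : Type*} [NontriviallyNormedField 𝕜] {ι : Type*} [Fintype ι]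
  {f g : 𝕜 → ι → 𝕜} {f' g' : ι → 𝕜} {τ : 𝕜}

theorem HasDerivAt.dotProduct (hf : HasDerivAt f f' τ) (hg : HasDerivAt g g' τ) :
    HasDerivAt (fun s => f s ⬝ᵥ g s) (f' ⬝ᵥ g τ + f τ ⬝ᵥ g') τ := by
  show HasDerivAt (fun s => ∑ i, f s i * g s i) (∑ i, f' i * g τ i + ∑ i, f τ i * g' i) τ
  rw [← Finset.sum_add_distrib]
  exact HasDerivAt.fun_sum fun i _ => (hasDerivAt_pi.1 hf i).mul (hasDerivAt_pi.1 hg i)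

theorem HasDerivAt.matrix_mulVec (M : Matrix ι ι 𝕜) (hg : HasDerivAt g g' τ) :
    HasDerivAt (fun s => M *ᵥ g s) (M *ᵥ g') τ :=
  hasDerivAt_pi.2 fun i => by
    simpa [mulVec] using (hasDerivAt_const τ (M i)).dotProduct hg

end VectorCalculus

section ContinuousOn

variable {α ι R : Type*} [TopologicalSpace α] [Fintype ι] [TopologicalSpace R]
  {s : Set α}

theorem ContinuousOn.dotProduct [Mul R] [AddCommMonoid R] [ContinuousAdd R] [ContinuousMul R]
    {f g : α → ι → R} (hf : ContinuousOn f s) (hg : ContinuousOn g s) :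
    ContinuousOn (fun x => f x ⬝ᵥ g x) s :=
  continuousOn_iff_continuous_domRestrict.2 <|
    (continuousOn_iff_continuous_domRestrict.1 hf).dotProduct
      (continuousOn_iff_continuous_domRestrict.1 hg)

theorem ContinuousOn.matrix_mulVec [NonUnitalNonAssocSemiring R] [ContinuousAdd R]
    [ContinuousMul R] {A : α → Matrix ι ι R} {g : α → ι → R} (hA : ContinuousOn A s)
    (hg : ContinuousOn g s) : ContinuousOn (fun x => A x *ᵥ g x) s :=
  continuousOn_iff_continuous_domRestrict.2 <|
    (continuousOn_iff_continuous_domRestrict.1 hA).matrix_mulVec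
      (continuousOn_iff_continuous_domRestrict.1 hg)

end ContinuousOn

theorem Matrix.IsSymm.dotProduct_mulVec_comm {ι R : Type*} [Fintype ι] [CommSemiring R]
    {M : Matrix ι ι R} (hM : M.IsSymm) (v w : ι → R) : v ⬝ᵥ M *ᵥ w = w ⬝ᵥ M *ᵥ v := by
  rw [dotProduct_mulVec, ← mulVec_transpose, hM.eq, dotProduct_comm]

theorem hasDerivAt_dotProduct_mulVec_div {ι : Type*} [Fintype ι] {M : Matrix ι ι ℝ}
    (hM : M.IsSymm) {g : ℝ → ι → ℝ} {f : ℝ → ℝ} {c τ : ℝ} {v : ι → ℝ}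
    (hg : HasDerivAt g (-c • g τ - f τ • v) τ) (hf : HasDerivAt f (-(c * f τ)) τ)
    (hfτ : f τ ≠ 0) :
    HasDerivAt (fun s => g s ⬝ᵥ M *ᵥ g s / f s)
      (-(c * (g τ ⬝ᵥ M *ᵥ g τ) / f τ) - 2 * (v ⬝ᵥ M *ᵥ g τ)) τ := by
  refine ((hg.dotProduct (hg.matrix_mulVec M)).div hf hfτ).congr_deriv ?_
  rw [hM.dotProduct_mulVec_comm (g τ)]
  simp only [sub_dotProduct, smul_dotProduct, smul_eq_mul]
  field_simp
  ring

theorem eq_mul_exp_of_hasDerivAt_eq_neg_mul {c T : ℝ} {f : ℝ → ℝ}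
    (hf : ∀ s ∈ Ico 0 T, HasDerivAt f (-(c * f s)) s) {t : ℝ} (ht : t ∈ Ico 0 T) :
    f t = f 0 * exp (-(c * t)) := by
  set g : ℝ → ℝ := fun s => f s * exp (c * s)
  have hg : ∀ s ∈ Ico 0 T, HasDerivAt g 0 s := fun s hs => by
    refine ((hf s hs).mul (((hasDerivAt_id s).const_mul c).exp)).congr_deriv ?_
    simp only [id, mul_one]
    ring
  have hconst := constant_of_has_deriv_right_zero
    (fun s hs => (hg s ⟨hs.1, hs.2.trans_lt ht.2⟩).continuousAt.continuousWithinAt)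
    (fun s hs => (hg s ⟨hs.1, hs.2.trans ht.2⟩).hasDerivWithinAt) t (right_mem_Icc.2 ht.1)
  simp only [g, mul_zero, exp_zero, mul_one] at hconst
  rw [← hconst, mul_assoc, ← exp_add]
  simp

theorem hasDerivAt_setIntegral_of_continuousOn_prod {X : Type*} [TopologicalSpace X]
    [MeasurableSpace X] [OpensMeasurableSpace X] {μ : Measure X} [IsFiniteMeasureOnCompacts μ]
    {K s : Set X} (hK : IsCompact K) (hs : MeasurableSet s) (hsK : s ⊆ K) {F F' : ℝ → X → ℝ}
    (hF : ∀ τ, ContinuousOn (F τ) K) (hF' : ContinuousOn (Function.uncurry F') (univ ×ˢ K))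
    (hderiv : ∀ x ∈ s, ∀ τ, HasDerivAt (F · x) (F' τ x) τ) (t : ℝ) :
    HasDerivAt (fun τ => ∫ x in s, F τ x ∂μ) (∫ x in s, F' t x ∂μ) t := by
  have hμs : μ s ≠ ⊤ := ((measure_mono hsK).trans_lt hK.measure_lt_top).ne
  obtain ⟨C, hC⟩ := (isCompact_Icc.prod hK).exists_bound_of_continuousOn
    (hF'.mono (prod_mono (subset_univ (Icc (t - 1) (t + 1))) subset_rfl))
  refine (hasDerivAt_integral_of_dominated_loc_of_deriv_le (bound := fun _ => C)
    (Metric.ball_mem_nhds t one_pos)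
    (.of_forall fun τ => (hF τ).aestronglyMeasurable_of_subset_isCompact hK hs hsK)
    ((hF t).integrableOn_of_subset_isCompact hK hs hsK hμs)
    ((hF'.uncurry_left t (mem_univ t)).aestronglyMeasurable_of_subset_isCompact hK hs hsK)
    ?_ (integrableOn_const hμs) ?_).2
  · filter_upwards [ae_restrict_mem hs] with x hx τ hτ
    rw [Real.ball_eq_Ioo] at hτ
    exact hC (τ, x) ⟨Ioo_subset_Icc_self hτ, hsK hx⟩
  · filter_upwards [ae_restrict_mem hs] with x hx τ _
    exact hderiv x hx τ

theorem Filter.EventuallyEq.grad_eq {n : ℕ} {f g : (Fin n → ℝ) → ℝ} {x : Fin n → ℝ}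
    (h : f =ᶠ[nhds x] g) : grad f x = grad g x := by
  unfold grad
  rw [h.fderiv_eq]

theorem setIntegral_congr_grad_of_eqOn {n : ℕ} {Ω : Set (Fin n → ℝ)} (hΩ : IsOpen Ω)
    {f g : (Fin n → ℝ) → ℝ} (h : EqOn f g Ω) (Φ : (Fin n → ℝ) → ℝ → (Fin n → ℝ) → ℝ) :
    ∫ x in Ω, Φ x (f x) (grad f x) = ∫ x in Ω, Φ x (g x) (grad g x) :=
  setIntegral_congr_fun hΩ.measurableSet fun x hx => by
    rw [h hx, (Filter.eventuallyEq_of_mem (hΩ.mem_nhds hx) h).grad_eq]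

theorem ContDiff.continuous_grad {n : ℕ} {f : (Fin n → ℝ) → ℝ} (hf : ContDiff ℝ 1 f) :
    Continuous (grad f) :=
  continuous_pi fun _ => (hf.continuous_fderiv one_ne_zero).clm_apply continuous_const

noncomputable def expDecay {α : Type*} (a u : α → ℝ) (τ : ℝ) (y : α) : ℝ :=
  a y * exp (-(u y * τ))

theorem hasDerivAt_expDecay {α : Type*} (a u : α → ℝ) (y : α) (τ : ℝ) :
    HasDerivAt (fun s => expDecay a u s y) (-(u y * expDecay a u τ y)) τ := by
  refine ((((hasDerivAt_id τ).const_mul (u y)).fun_neg.exp).const_mul (a y)).congr_deriv ?_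
  simp only [expDecay, id, mul_one]
  ring

section Gradient

variable {n : ℕ} {a u : (Fin n → ℝ) → ℝ} {x : Fin n → ℝ}

theorem grad_expDecay (ha : DifferentiableAt ℝ a x) (hu : DifferentiableAt ℝ u x) (τ : ℝ) :
    grad (expDecay a u τ) x = exp (-(u x * τ)) • (grad a x - (τ * a x) • grad u x) := by
  have h : HasFDerivAt (expDecay a u τ) _ x :=
    ha.hasFDerivAt.fun_mul (hu.hasFDerivAt.mul_const τ).fun_neg.exp
  funext i
  simp only [grad, h.fderiv, _root_.add_apply, _root_.smul_apply, _root_.neg_apply,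
    Pi.smul_apply, Pi.sub_apply, smul_eq_mul]
  ring

theorem hasDerivAt_grad_expDecay (ha : DifferentiableAt ℝ a x) (hu : DifferentiableAt ℝ u x)
    (τ : ℝ) :
    HasDerivAt (fun s => grad (expDecay a u s) x)
      (-u x • grad (expDecay a u τ) x - expDecay a u τ x • grad u x) τ := by
  simp only [grad_expDecay ha hu]
  have hlin : HasDerivAt (fun s : ℝ => grad a x - (s * a x) • grad u x) (-(a x • grad u x)) τ := by
    simpa using ((hasDerivAt_id τ).mul_const (a x)).smul_const (grad u x) |>.const_sub (grad a x)
  refine ((((hasDerivAt_id τ).const_mul (u x)).fun_neg.exp).smul hlin).congr_deriv ?_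
  funext i
  simp only [expDecay, id, Pi.add_apply, Pi.sub_apply, Pi.smul_apply, Pi.neg_apply, smul_eq_mul]
  ring

theorem continuous_grad_expDecay (ha : ContDiff ℝ 1 a) (hu : ContDiff ℝ 1 u) :
    Continuous fun q : ℝ × (Fin n → ℝ) => grad (expDecay a u q.1) q.2 := by
  simp only [grad_expDecay (ha.differentiable one_ne_zero _) (hu.differentiable one_ne_zero _)]
  have hca := ha.continuous; have hcu := hu.continuous
  have hga := ha.continuous_grad; have hgu := hu.continuous_grad
  fun_prop

end Gradient

theorem hasDerivAt_integral_dotProduct_mulVec_grad_div_expDecay {n : ℕ}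
    {K Ω : Set (Fin n → ℝ)} (hK : IsCompact K) (hΩ : MeasurableSet Ω) (hΩK : Ω ⊆ K)
    {D : (Fin n → ℝ) → Matrix (Fin n) (Fin n) ℝ} (hDc : ContinuousOn D K)
    (hDsymm : ∀ x ∈ Ω, (D x).IsSymm) {a u : (Fin n → ℝ) → ℝ} (ha : ContDiff ℝ 1 a)
    (ha_ne : ∀ x ∈ K, a x ≠ 0) (hu : ContDiff ℝ 1 u) (t : ℝ) :
    HasDerivAt
      (fun τ => ∫ x in Ω,
        grad (expDecay a u τ) x ⬝ᵥ D x *ᵥ grad (expDecay a u τ) x / expDecay a u τ x)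
      (-(∫ x in Ω,
          u x * (grad (expDecay a u t) x ⬝ᵥ D x *ᵥ grad (expDecay a u t) x) / expDecay a u t x)
        - 2 * ∫ x in Ω, grad u x ⬝ᵥ D x *ᵥ grad (expDecay a u t) x) t := by
  set S : Set (ℝ × (Fin n → ℝ)) := univ ×ˢ K
  have hW : ContinuousOn (fun q : ℝ × (Fin n → ℝ) => expDecay a u q.1 q.2) S := by
    have hca := ha.continuous; have hcu := hu.continuous
    unfold expDecay
    fun_prop
  have hW_ne : ∀ q ∈ S, expDecay a u q.1 q.2 ≠ 0 :=
    fun q hq => mul_ne_zero (ha_ne q.2 hq.2) (exp_pos _).ne'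
  have hG : ContinuousOn (fun q : ℝ × (Fin n → ℝ) => grad (expDecay a u q.1) q.2) S :=
    (continuous_grad_expDecay ha hu).continuousOn
  have hDG : ContinuousOn (fun q : ℝ × (Fin n → ℝ) => D q.2 *ᵥ grad (expDecay a u q.1) q.2) S :=
    (hDc.comp continuous_snd.continuousOn fun q hq => hq.2).matrix_mulVec hG
  have hQ := hG.dotProduct hDG
  have hA := ((hu.continuous.comp continuous_snd).continuousOn.mul hQ).div hW hW_ne
  have hB := (hu.continuous_grad.comp continuous_snd).continuousOn.dotProduct hDG
  have slice : ∀ {φ : ℝ × (Fin n → ℝ) → ℝ}, ContinuousOn φ S → ∀ τ,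
      ContinuousOn (fun x => φ (τ, x)) K :=
    fun hφ τ => hφ.comp (Continuous.prodMk_right τ).continuousOn fun x hx => ⟨mem_univ τ, hx⟩
  have hμΩ : volume Ω ≠ ⊤ := ((measure_mono hΩK).trans_lt hK.measure_lt_top).ne
  have hA_int : IntegrableOn (fun x =>
      u x * (grad (expDecay a u t) x ⬝ᵥ D x *ᵥ grad (expDecay a u t) x) / expDecay a u t x) Ω :=
    (slice hA t).integrableOn_of_subset_isCompact hK hΩ hΩK hμΩ
  have hB_int : IntegrableOn (fun x => grad u x ⬝ᵥ D x *ᵥ grad (expDecay a u t) x) Ω :=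
    (slice hB t).integrableOn_of_subset_isCompact hK hΩ hΩK hμΩ
  have key := hasDerivAt_setIntegral_of_continuousOn_prod (μ := volume) hK hΩ hΩK
    (F' := fun τ x => -(u x * (grad (expDecay a u τ) x ⬝ᵥ D x *ᵥ grad (expDecay a u τ) x)
      / expDecay a u τ x) - 2 * (grad u x ⬝ᵥ D x *ᵥ grad (expDecay a u τ) x))
    (slice (hQ.div hW hW_ne)) (hA.neg.sub (continuousOn_const.mul hB))
    (fun x hx τ => hasDerivAt_dotProduct_mulVec_div (hDsymm x hx)
      (hasDerivAt_grad_expDecay (ha.differentiable one_ne_zero x)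
        (hu.differentiable one_ne_zero x) τ)
      (hasDerivAt_expDecay a u x τ) (hW_ne (τ, x) ⟨mem_univ τ, hΩK hx⟩)) t
  rw [integral_sub, integral_neg, integral_const_mul] at key
  exacts [key, hA_int.neg, hB_int.const_mul 2]

/-- evolution of the weighted Dirichlet quantity
`(1/2)∫ (∇w·D∇w)/w` under `w_t = -uw`. -/
theorem stmt18 (n : ℕ) (Ω : Set (Fin n → ℝ)) (hΩ : IsOpen Ω) (hΩb : Bornology.IsBounded Ω)
    (T : ℝ) (hT : 0 < T)
    (D : (Fin n → ℝ) → Matrix (Fin n) (Fin n) ℝ)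
    (hDc : ContinuousOn D (closure Ω))
    (hDpsd : ∀ x ∈ closure Ω, (D x).PosSemidef)
    (u : (Fin n → ℝ) → ℝ) (hu_c : ContDiff ℝ 1 u) (hu_nonneg : ∀ x, 0 ≤ u x)
    (w : (Fin n → ℝ) → ℝ → ℝ)
    (hw_pos : ∀ x ∈ closure Ω, ∀ t ∈ Ico 0 T, 0 < w x t)
    (hw_x : ∀ t ∈ Ico 0 T, ContDiff ℝ 1 (fun x => w x t))
    (heq_w : ∀ x ∈ closure Ω, ∀ t ∈ Ico 0 T,
      HasDerivAt (w x) (-(u x * w x t)) t) :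
    ∀ t ∈ Ioo 0 T,
      HasDerivAt
        (fun τ => (1/2) * ∫ x in Ω,
          (grad (fun y => w y τ) x ⬝ᵥ (D x).mulVec (grad (fun y => w y τ) x)) / w x τ)
        (-(1/2) * (∫ x in Ω,
            u x * (grad (fun y => w y t) x ⬝ᵥ (D x).mulVec (grad (fun y => w y t) x))
              / w x t)
          - ∫ x in Ω, grad u x ⬝ᵥ (D x).mulVec (grad (fun y => w y t) x)) t ∧
      -(1/2) * (∫ x in Ω,
            u x * (grad (fun y => w y t) x ⬝ᵥ (D x).mulVec (grad (fun y => w y t) x))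
              / w x t)
          - (∫ x in Ω, grad u x ⬝ᵥ (D x).mulVec (grad (fun y => w y t) x))
        ≤ -∫ x in Ω, grad u x ⬝ᵥ (D x).mulVec (grad (fun y => w y t) x) := by
  intro t ht
  have h0 : (0 : ℝ) ∈ Ico 0 T := ⟨le_rfl, hT⟩
  set a := fun x => w x 0
  have hw : ∀ τ ∈ Ico 0 T, EqOn (fun y => w y τ) (expDecay a u τ) Ω :=
    fun τ hτ x hx => eq_mul_exp_of_hasDerivAt_eq_neg_mul (heq_w x (subset_closure hx)) hτ
  have hloc := fun τ hτ => setIntegral_congr_grad_of_eqOn hΩ (hw τ hτ)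
  have key := hasDerivAt_integral_dotProduct_mulVec_grad_div_expDecay hΩb.isCompact_closure
    hΩ.measurableSet subset_closure hDc
    (fun x hx => isHermitian_iff_isSymm.1 (hDpsd x (subset_closure hx)).1) (hw_x 0 h0)
    (fun x hx => (hw_pos x hx 0 h0).ne') hu_c t
  have hA_nonneg : 0 ≤ ∫ x in Ω,
      u x * (grad (fun y => w y t) x ⬝ᵥ (D x).mulVec (grad (fun y => w y t) x)) / w x t :=
    setIntegral_nonneg hΩ.measurableSet fun x hx =>
      div_nonneg (mul_nonneg (hu_nonneg x)
        ((hDpsd x (subset_closure hx)).dotProduct_mulVec_nonneg _))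
        (hw_pos x (subset_closure hx) t (Ioo_subset_Ico_self ht)).le
  refine ⟨?_, by linarith⟩
  rw [hloc t (Ioo_subset_Ico_self ht) fun x v p => u x * (p ⬝ᵥ D x *ᵥ p) / v,
    hloc t (Ioo_subset_Ico_self ht) fun x _ p => grad u x ⬝ᵥ D x *ᵥ p]
  refine ((key.const_mul (1/2)).congr_of_eventuallyEq ?_).congr_deriv (by ring)
  filter_upwards [isOpen_Ioo.mem_nhds ht] with τ hτ
  rw [hloc τ (Ioo_subset_Ico_self hτ) fun x v p => p ⬝ᵥ D x *ᵥ p / v]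
end
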